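/- Let (X, T, D) be a rank-r MGDS satisfying (DC), let J ⊆ {1,…,r}, let X_J = { x ∈ X : σ(x)_j = ∞ if and only if j ∈ J }, and let N ∈ ℕ^r. Define the relation R_J^N on X_J by: x R_J^N y if and only if there exist m, n ∈ ℕ^r with m_j = n_j ≤ N_j for all j ∈ J, x ∈ D m, y ∈ D n, and T m x = T n y. Then (i) R_J^N is an equivalence relation on X_J; (ii) R_J^N ⊆ R_J^{N'} whenever N ≤ N' coordinatewise; and (iii) the union of the R_J^N over all N ∈ ℕ^r equals the relation R_J (defined by the same condition without the bound ≤ N_j). -/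

import Mathlib

/-- A multiply generated dynamical system (MGDS) of rank `r` on a set `X`:
a family of subsets `D n ⊆ X` and maps `T n : X → X` indexed by `n ∈ ℕ^r`
such that `D 0 = X`, `T 0 = id`, `D (m+n) = {x ∈ D n | T n x ∈ D m}` and
`T (m+n) x = T m (T n x)` on `D (m+n)`. -/
structure MGDS (r : ℕ) (X : Type*) where
  D : (Fin r → ℕ) → Set X
  T : (Fin r → ℕ) → X → X
  D_zero : D 0 = Set.univ
  T_zero : ∀ x, T 0 x = x
  D_add : ∀ m n, D (m + n) = {x ∈ D n | T n x ∈ D m}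
  T_add : ∀ m n, ∀ x ∈ D (m + n), T (m + n) x = T m (T n x)

/-- The domain condition (DC): `D m ∩ D n ⊆ D (m ⊔ n)` where `⊔` is the
coordinatewise maximum. -/
def MGDS.DC {r : ℕ} {X : Type*} (S : MGDS r X) : Prop :=
  ∀ m n : Fin r → ℕ, S.D m ∩ S.D n ⊆ S.D (m ⊔ n)

/-- The exit time `σ(x) ∈ (ℕ∞)^r`: coordinatewise,
`σ(x)_j = sup { n_j : n ∈ ℕ^r, x ∈ D n }`, the supremum taken in `ℕ∞`. -/
noncomputable def MGDS.exitTime {r : ℕ} {X : Type*} (S : MGDS r X) (x : X) : Fin r → ℕ∞ :=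
  fun j => ⨆ (n : Fin r → ℕ) (_ : x ∈ S.D n), (n j : ℕ∞)

/-!
`Meet m n x y` says that the orbits of `x` and `y` meet at the times `m` and `n`. Given
`Meet m n x y` and `Meet m' n' y z`, the domain condition puts `y` in `D p` for `p = n ⊔ m'`, and
the semigroup law pushes both meetings forward along `y` to time `p`, giving
`Meet (p - n + m) (p - m' + n') x z`. On a coordinate `j ∈ J` both new indices equal
`max (n j) (m' j)`, so they agree and obey every bound the old ones obeyed; this is transitivity.
The other claims only move the bound on the `J`-coordinates.
-/

namespace MGDS

variable {r : ℕ} {X : Type*} (S : MGDS r X)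

def Meet (m n : Fin r → ℕ) (x y : X) : Prop :=
  x ∈ S.D m ∧ y ∈ S.D n ∧ S.T m x = S.T n y

variable {S}

theorem mem_D_add_iff {m n : Fin r → ℕ} {x : X} :
    x ∈ S.D (m + n) ↔ x ∈ S.D n ∧ S.T n x ∈ S.D m := by
  rw [S.D_add]; rfl

theorem meet_refl (x : X) : S.Meet 0 0 x x := by
  simp [Meet, S.D_zero]

theorem Meet.symm {m n : Fin r → ℕ} {x y : X} (h : S.Meet m n x y) : S.Meet n m y x :=
  ⟨h.2.1, h.1, h.2.2.symm⟩

theorem Meet.add_left {m n a : Fin r → ℕ} {x y : X} (h : S.Meet m n x y)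
    (hy : y ∈ S.D (a + n)) : S.Meet (a + m) (a + n) x y := by
  obtain ⟨hx, -, he⟩ := h
  have hxa : x ∈ S.D (a + m) := mem_D_add_iff.2 ⟨hx, he ▸ (mem_D_add_iff.1 hy).2⟩
  refine ⟨hxa, hy, ?_⟩
  rw [S.T_add a m x hxa, S.T_add a n y hy, he]

theorem Meet.trans (hDC : S.DC) {m n m' n' : Fin r → ℕ} {x y z : X}
    (h : S.Meet m n x y) (h' : S.Meet m' n' y z) :
    S.Meet ((n ⊔ m') - n + m) ((n ⊔ m') - m' + n') x z := by
  have hp : y ∈ S.D (n ⊔ m') := hDC n m' ⟨h.2.1, h'.1⟩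
  have hn : (n ⊔ m') - n + n = n ⊔ m' := tsub_add_cancel_of_le le_sup_left
  have hm' : (n ⊔ m') - m' + m' = n ⊔ m' := tsub_add_cancel_of_le le_sup_right
  have hx := h.add_left (a := (n ⊔ m') - n) (by rwa [hn])
  have hz := h'.symm.add_left (a := (n ⊔ m') - m') (by rwa [hm'])
  refine ⟨hx.1, hz.1, ?_⟩
  rw [hx.2.2, hz.2.2, hn, hm']

end MGDS

/-- in an MGDS with (DC), for `J ⊆ {1,…,r}` and `N ∈ ℕ^r`, the
bounded relation `R_J^N` on `X_J` (requiring `m_j = n_j ≤ N_j` for `j ∈ J`) is an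
equivalence relation; `R_J^N ⊆ R_J^{N'}` for `N ≤ N'`; and the union of the
`R_J^N` over all `N ∈ ℕ^r` is the relation `R_J`. -/
theorem mgds_RJN_equivalence_monotone_union
    {r : ℕ} {X : Type*} (S : MGDS r X) (hDC : S.DC) (J : Set (Fin r)) :
    let XJ : Set X := {x | ∀ j, S.exitTime x j = ⊤ ↔ j ∈ J}
    let RN : (Fin r → ℕ) → X → X → Prop := fun N x y => ∃ m n : Fin r → ℕ,
      (∀ j ∈ J, m j = n j ∧ n j ≤ N j) ∧ x ∈ S.D m ∧ y ∈ S.D n ∧ S.T m x = S.T n y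
    let R : X → X → Prop := fun x y => ∃ m n : Fin r → ℕ,
      (∀ j ∈ J, m j = n j) ∧ x ∈ S.D m ∧ y ∈ S.D n ∧ S.T m x = S.T n y
    (∀ N : Fin r → ℕ,
      (∀ x ∈ XJ, RN N x x) ∧
      (∀ x ∈ XJ, ∀ y ∈ XJ, RN N x y → RN N y x) ∧
      (∀ x ∈ XJ, ∀ y ∈ XJ, ∀ z ∈ XJ, RN N x y → RN N y z → RN N x z)) ∧
    (∀ N N' : Fin r → ℕ, N ≤ N' →
      ∀ x ∈ XJ, ∀ y ∈ XJ, RN N x y → RN N' x y) ∧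
    (∀ x ∈ XJ, ∀ y ∈ XJ, ((∃ N : Fin r → ℕ, RN N x y) ↔ R x y)) := by
  intro XJ RN R
  refine ⟨fun N => ⟨?refl, ?symm, ?trans⟩, ?mono, fun x _ y _ => ⟨?bounded, ?unbounded⟩⟩
  case refl => exact fun x _ => ⟨0, 0, fun j _ => ⟨rfl, Nat.zero_le _⟩, MGDS.meet_refl x⟩
  case symm =>
    rintro x _ y _ ⟨m, n, hJ, h⟩
    exact ⟨n, m, fun j hj => ⟨(hJ j hj).1.symm, (hJ j hj).1 ▸ (hJ j hj).2⟩, MGDS.Meet.symm h⟩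
  case trans =>
    rintro x _ y _ z _ ⟨m, n, hJ, h⟩ ⟨m', n', hJ', h'⟩
    refine ⟨_, _, fun j hj => ?_, MGDS.Meet.trans hDC h h'⟩
    obtain ⟨hmn, hnN⟩ := hJ j hj
    obtain ⟨hmn', hnN'⟩ := hJ' j hj
    simp only [Pi.add_apply, Pi.sub_apply, Pi.sup_apply]
    omega
  case mono =>
    rintro N N' hN x _ y _ ⟨m, n, hJ, h⟩
    exact ⟨m, n, fun j hj => ⟨(hJ j hj).1, (hJ j hj).2.trans (hN j)⟩, h⟩
  case bounded =>
    rintro ⟨N, m, n, hJ, h⟩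
    exact ⟨m, n, fun j hj => (hJ j hj).1, h⟩
  case unbounded =>
    rintro ⟨m, n, hJ, h⟩
    exact ⟨n, m, n, fun j hj => ⟨hJ j hj, le_rfl⟩, h⟩
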